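/- arXiv:1704.08891 — 3 statements merged into one kernel-verified Lean document; each statement's English description precedes it below -/
import Mathlib

section
/- Let β ∈ [0,1) and δ⋆ > 0 be such that δ⋆ k^{−β} ∈ (0,1) for all k ≥ 2. Then for any r ∈ ℝ, as n → ∞, Σ_{j=2}^{n} j^{−r} ∏_{k=j}^{n} (1 − δ⋆ k^{−β}) = O(n^{β − r}). -/
/-!
Write `a k = δ⋆ k^{-β}` and `P j = ∏_{k=j}^{n} (1 - a k)`. Since `a j P (j+1) = P (j+1) - P j`,
the sum `∑_j a j P (j+1)` telescopes to `1 - P 2 ≤ 1`. For `j > n/2` we have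
`j^{-r} ≤ 2^{|β-r|} n^{β-r} j^{-β}` and `P j ≤ P (j+1)`, so these terms contribute at most
`2^{|β-r|} n^{β-r} / δ⋆`. For `j ≤ n/2`, `P j ≤ P (n/2+1) ≤ exp (-δ⋆ n^{1-β} / 2)`, and since
`β < 1` this stretched exponential beats the polynomial factor `n^{1+|r|}`.
-/

open Finset Real Filter Topology

theorem prod_Icc_one_sub_eq_mul {R : Type*} [CommRing R] (a : ℕ → R) {j n : ℕ} (h : j ≤ n) :
    ∏ k ∈ Icc j n, (1 - a k) = (1 - a j) * ∏ k ∈ Icc (j + 1) n, (1 - a k) := by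
  rw [Icc_add_one_left_eq_Ioc, mul_prod_Ioc_eq_prod_Icc (f := fun k ↦ 1 - a k) h]

theorem sum_mul_prod_Icc_one_sub {R : Type*} [CommRing R] (a : ℕ → R) (i n : ℕ) :
    ∑ j ∈ Icc i n, a j * ∏ k ∈ Icc (j + 1) n, (1 - a k) = 1 - ∏ k ∈ Icc i n, (1 - a k) := by
  rcases lt_or_ge (n + 1) i with h | h
  · simp [Icc_eq_empty_of_lt (by omega : n < i)]
  set P : ℕ → R := fun j ↦ ∏ k ∈ Icc j n, (1 - a k)
  have hstep : ∀ j ∈ Icc i n, a j * P (j + 1) = P (j + 1) - P j := fun j hj ↦ by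
    simp only [P, prod_Icc_one_sub_eq_mul a (mem_Icc.1 hj).2]
    ring
  have htelescope := sum_Ico_sub P h
  rw [Ico_add_one_right_eq_Icc] at htelescope
  rw [sum_congr rfl hstep, htelescope]
  simp [P]

theorem prod_one_sub_le_exp_neg_sum {ι : Type*} (s : Finset ι) {a : ι → ℝ}
    (ha : ∀ k ∈ s, a k ≤ 1) : ∏ k ∈ s, (1 - a k) ≤ exp (-∑ k ∈ s, a k) := by
  rw [← sum_neg_distrib, exp_sum]
  exact prod_le_prod (fun k hk ↦ sub_nonneg.2 (ha k hk)) fun k _ ↦ one_sub_le_exp_neg _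

section UnitIntervalFactors

variable {a w : ℕ → ℝ} {i n : ℕ}

theorem prod_Icc_one_sub_nonneg (ha : ∀ k ∈ Icc i n, a k ≤ 1) (j : ℕ) (hj : i ≤ j) :
    0 ≤ ∏ k ∈ Icc j n, (1 - a k) :=
  prod_nonneg fun k hk ↦ sub_nonneg.2 (ha k (Icc_subset_Icc_left hj hk))

theorem sum_mul_prod_Icc_one_sub_le (ha : ∀ k ∈ Icc i n, 0 ≤ a k ∧ a k ≤ 1) {M : ℝ}
    (hM : 0 ≤ M) (hw : ∀ j ∈ Icc i n, w j ≤ M * a j) :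
    ∑ j ∈ Icc i n, w j * ∏ k ∈ Icc j n, (1 - a k) ≤ M := by
  have hP := prod_Icc_one_sub_nonneg fun k hk ↦ (ha k hk).2
  have hterm : ∀ j ∈ Icc i n, w j * ∏ k ∈ Icc j n, (1 - a k)
      ≤ M * (a j * ∏ k ∈ Icc (j + 1) n, (1 - a k)) := fun j hj ↦ by
    obtain ⟨hij, hjn⟩ := mem_Icc.1 hj
    have hstep : ∏ k ∈ Icc j n, (1 - a k) ≤ ∏ k ∈ Icc (j + 1) n, (1 - a k) := by
      rw [prod_Icc_one_sub_eq_mul a hjn]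
      exact mul_le_of_le_one_left (hP _ (by omega)) (by linarith [(ha j hj).1])
    calc w j * ∏ k ∈ Icc j n, (1 - a k) ≤ M * a j * ∏ k ∈ Icc j n, (1 - a k) :=
          mul_le_mul_of_nonneg_right (hw j hj) (hP j hij)
      _ ≤ M * a j * ∏ k ∈ Icc (j + 1) n, (1 - a k) :=
          mul_le_mul_of_nonneg_left hstep (mul_nonneg hM (ha j hj).1)
      _ = _ := mul_assoc _ _ _
  calc ∑ j ∈ Icc i n, w j * ∏ k ∈ Icc j n, (1 - a k)
      ≤ M * (1 - ∏ k ∈ Icc i n, (1 - a k)) := by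
        rw [← sum_mul_prod_Icc_one_sub, mul_sum]
        exact sum_le_sum hterm
    _ ≤ M := mul_le_of_le_one_right hM (sub_le_self _ (hP i le_rfl))

theorem sum_mul_prod_Icc_one_sub_le_card_mul_exp (ha : ∀ k ∈ Icc i n, 0 ≤ a k ∧ a k ≤ 1)
    {m : ℕ} {W : ℝ} (hw : ∀ j ∈ Icc i m, 0 ≤ w j ∧ w j ≤ W) :
    ∑ j ∈ Icc i m, w j * ∏ k ∈ Icc j n, (1 - a k)
      ≤ #(Icc i m) * (W * exp (-∑ k ∈ Icc (m + 1) n, a k)) := by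
  rw [← nsmul_eq_mul]
  refine sum_le_card_nsmul _ _ _ fun j hj ↦ ?_
  obtain ⟨hij, hjm⟩ := mem_Icc.1 hj
  obtain ⟨hw0, hwW⟩ := hw j hj
  have hsub : Icc (m + 1) n ⊆ Icc j n := Icc_subset_Icc (by omega) le_rfl
  have hfactor : ∀ k ∈ Icc j n, 0 ≤ 1 - a k := fun k hk ↦
    sub_nonneg.2 (ha k (Icc_subset_Icc_left hij hk)).2
  calc w j * ∏ k ∈ Icc j n, (1 - a k) ≤ W * ∏ k ∈ Icc (m + 1) n, (1 - a k) := by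
        refine mul_le_mul hwW ?_ (prod_nonneg hfactor) (hw0.trans hwW)
        exact prod_le_prod_of_subset_of_le_one hsub hfactor fun k hk _ ↦ by
          linarith [(ha k (Icc_subset_Icc_left hij hk)).1]
    _ ≤ W * exp (-∑ k ∈ Icc (m + 1) n, a k) := by
        refine mul_le_mul_of_nonneg_left (prod_one_sub_le_exp_neg_sum _ fun k hk ↦ ?_)
          (hw0.trans hwW)
        exact (ha k (Icc_subset_Icc_left (by omega) hk)).2

end UnitIntervalFactors

theorem tendsto_rpow_mul_exp_neg_mul_rpow_atTop_nhds_zero (s : ℝ) {a c : ℝ} (ha : 0 < a)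
    (hc : 0 < c) : Tendsto (fun x : ℝ ↦ x ^ s * exp (-c * x ^ a)) atTop (𝓝 0) := by
  refine ((tendsto_rpow_mul_exp_neg_mul_atTop_nhds_zero (s / a) c hc).comp
    (tendsto_rpow_atTop ha)).congr' ?_
  filter_upwards [eventually_ge_atTop 0] with x hx
  simp only [Function.comp_apply, ← rpow_mul hx, mul_div_cancel₀ s ha.ne']

theorem eventually_rpow_mul_exp_neg_mul_rpow_le_rpow (s t : ℝ) {a c : ℝ} (ha : 0 < a)
    (hc : 0 < c) : ∀ᶠ n : ℕ in atTop, (n : ℝ) ^ s * exp (-c * (n : ℝ) ^ a) ≤ (n : ℝ) ^ t := by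
  have hlim := (tendsto_rpow_mul_exp_neg_mul_rpow_atTop_nhds_zero (s - t) ha hc).comp
    tendsto_natCast_atTop_atTop
  filter_upwards [hlim.eventually (gt_mem_nhds one_pos), eventually_gt_atTop 0] with n hlt hn
  have hn' : (0 : ℝ) < n := Nat.cast_pos.2 hn
  calc (n : ℝ) ^ s * exp (-c * (n : ℝ) ^ a)
      = (n : ℝ) ^ (s - t) * exp (-c * (n : ℝ) ^ a) * (n : ℝ) ^ t := by
        rw [mul_right_comm, ← rpow_add hn', sub_add_cancel]
    _ ≤ 1 * (n : ℝ) ^ t := mul_le_mul_of_nonneg_right hlt.le (rpow_nonneg hn'.le t)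
    _ = (n : ℝ) ^ t := one_mul _

theorem rpow_le_two_rpow_abs_mul_rpow {x y : ℝ} (e : ℝ) (hx : 0 < x) (hyx : y ≤ 2 * x)
    (hxy : x ≤ y) : x ^ e ≤ 2 ^ |e| * y ^ e := by
  rcases le_total 0 e with he | he
  · calc x ^ e ≤ y ^ e := rpow_le_rpow hx.le hxy he
      _ ≤ 2 ^ |e| * y ^ e :=
        le_mul_of_one_le_left (rpow_nonneg (hx.le.trans hxy) e)
          (one_le_rpow one_le_two (abs_nonneg e))
  · calc x ^ e ≤ (y / 2) ^ e := rpow_le_rpow_of_nonpos (by linarith) (by linarith) he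
      _ = 2 ^ |e| * y ^ e := by
        rw [div_rpow (by linarith) zero_le_two, abs_of_nonpos he, rpow_neg zero_le_two,
          div_eq_mul_inv, mul_comm]

theorem rpow_neg_le_rpow_abs {x y : ℝ} (r : ℝ) (hx : 1 ≤ x) (hxy : x ≤ y) : x ^ (-r) ≤ y ^ |r| :=
  (rpow_le_rpow_of_exponent_le hx (neg_le_abs r)).trans
    (rpow_le_rpow (by linarith) hxy (abs_nonneg r))

theorem rpow_one_sub_div_two_le_sum_Icc_rpow_neg {β : ℝ} (hβ : 0 ≤ β) {n : ℕ} (hn : 0 < n) :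
    (n : ℝ) ^ (1 - β) / 2 ≤ ∑ k ∈ Icc (n / 2 + 1) n, (k : ℝ) ^ (-β) := by
  have hn' : (0 : ℝ) < n := Nat.cast_pos.2 hn
  have hcard : (n : ℝ) / 2 ≤ #(Icc (n / 2 + 1) n) := by
    rw [Nat.card_Icc, div_le_iff₀ two_pos]
    exact_mod_cast (by omega : n ≤ (n + 1 - (n / 2 + 1)) * 2)
  calc (n : ℝ) ^ (1 - β) / 2 = (n : ℝ) / 2 * (n : ℝ) ^ (-β) := by
        rw [sub_eq_add_neg, rpow_add hn', rpow_one]; ring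
    _ ≤ #(Icc (n / 2 + 1) n) * (n : ℝ) ^ (-β) :=
        mul_le_mul_of_nonneg_right hcard (rpow_nonneg hn'.le _)
    _ = ∑ _k ∈ Icc (n / 2 + 1) n, (n : ℝ) ^ (-β) := by rw [sum_const, nsmul_eq_mul]
    _ ≤ ∑ k ∈ Icc (n / 2 + 1) n, (k : ℝ) ^ (-β) := sum_le_sum fun k hk ↦ by
        obtain ⟨hk1, hkn⟩ := mem_Icc.1 hk
        exact rpow_le_rpow_of_nonpos (by exact_mod_cast (by omega : 0 < k))
          (by exact_mod_cast hkn) (by linarith)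

section StepSize

variable {β δ : ℝ}

theorem mul_rpow_neg_nonneg_and_le_one (hδ : 0 < δ)
    (hlt : ∀ k : ℕ, 2 ≤ k → δ * (k : ℝ) ^ (-β) < 1) {k : ℕ} (hk : 2 ≤ k) :
    0 ≤ δ * (k : ℝ) ^ (-β) ∧ δ * (k : ℝ) ^ (-β) ≤ 1 :=
  ⟨by positivity, (hlt k hk).le⟩

theorem sum_Icc_rpow_mul_prod_le_of_le_two_mul (r : ℝ) (hδ : 0 < δ)
    (hlt : ∀ k : ℕ, 2 ≤ k → δ * (k : ℝ) ^ (-β) < 1) {i n : ℕ} (hi : 2 ≤ i) (hn : n ≤ 2 * i) :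
    ∑ j ∈ Icc i n, (j : ℝ) ^ (-r) * ∏ k ∈ Icc j n, (1 - δ * (k : ℝ) ^ (-β))
      ≤ 2 ^ |β - r| / δ * (n : ℝ) ^ (β - r) := by
  refine sum_mul_prod_Icc_one_sub_le
    (fun k hk ↦ mul_rpow_neg_nonneg_and_le_one hδ hlt (hi.trans (mem_Icc.1 hk).1))
    (by positivity) fun j hj ↦ ?_
  obtain ⟨hij, hjn⟩ := mem_Icc.1 hj
  have hj : (0 : ℝ) < j := by exact_mod_cast (by omega : 0 < j)
  have hbound := rpow_le_two_rpow_abs_mul_rpow (β - r) hj (y := n)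
    (by exact_mod_cast (by omega : n ≤ 2 * j)) (by exact_mod_cast hjn)
  calc (j : ℝ) ^ (-r) = (j : ℝ) ^ (β - r) * (j : ℝ) ^ (-β) := by
        rw [← rpow_add hj]; ring_nf
    _ ≤ 2 ^ |β - r| * (n : ℝ) ^ (β - r) * (j : ℝ) ^ (-β) :=
        mul_le_mul_of_nonneg_right hbound (rpow_nonneg hj.le _)
    _ = 2 ^ |β - r| / δ * (n : ℝ) ^ (β - r) * (δ * (j : ℝ) ^ (-β)) := by
        field_simp

theorem sum_Icc_rpow_mul_prod_le_exp (r : ℝ) (hβ : 0 ≤ β) (hδ : 0 < δ)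
    (hlt : ∀ k : ℕ, 2 ≤ k → δ * (k : ℝ) ^ (-β) < 1) {n : ℕ} (hn : 0 < n) :
    ∑ j ∈ Icc 2 (n / 2), (j : ℝ) ^ (-r) * ∏ k ∈ Icc j n, (1 - δ * (k : ℝ) ^ (-β))
      ≤ (n : ℝ) ^ (1 + |r|) * exp (-(δ / 2) * (n : ℝ) ^ (1 - β)) := by
  have hn' : (0 : ℝ) < n := Nat.cast_pos.2 hn
  have hw : ∀ j ∈ Icc 2 (n / 2), 0 ≤ (j : ℝ) ^ (-r) ∧ (j : ℝ) ^ (-r) ≤ (n : ℝ) ^ |r| :=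
    fun j hj ↦ by
      obtain ⟨h2j, hjn⟩ := mem_Icc.1 hj
      exact ⟨by positivity, rpow_neg_le_rpow_abs r (by exact_mod_cast (by omega : 1 ≤ j))
        (by exact_mod_cast (by omega : j ≤ n))⟩
  have hsum := rpow_one_sub_div_two_le_sum_Icc_rpow_neg hβ hn
  calc _ ≤ #(Icc 2 (n / 2)) * ((n : ℝ) ^ |r| *
          exp (-∑ k ∈ Icc (n / 2 + 1) n, δ * (k : ℝ) ^ (-β))) :=
        sum_mul_prod_Icc_one_sub_le_card_mul_exp
          (fun k hk ↦ mul_rpow_neg_nonneg_and_le_one hδ hlt (mem_Icc.1 hk).1) hw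
    _ ≤ n * ((n : ℝ) ^ |r| * exp (-(δ / 2) * (n : ℝ) ^ (1 - β))) := by
        rw [← mul_sum]
        gcongr
        · rw [Nat.card_Icc]; exact_mod_cast (by omega : n / 2 + 1 - 2 ≤ n)
        · linarith [mul_le_mul_of_nonneg_left hsum hδ.le]
    _ = (n : ℝ) ^ (1 + |r|) * exp (-(δ / 2) * (n : ℝ) ^ (1 - β)) := by
        rw [rpow_add hn', rpow_one]; ring

end StepSize

/-- Let `β ∈ [0,1)` and `δ⋆ > 0` with `δ⋆ k^{-β} ∈ (0,1)` for `k ≥ 2`. Then for any `r ∈ ℝ`,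
`∑_{j=2}^{n} j^{-r} ∏_{k=j}^{n} (1 - δ⋆ k^{-β}) = O(n^{β - r})` as `n → ∞`. -/
theorem stmt10 (β δstar r : ℝ) (hβ : β ∈ Set.Ico (0 : ℝ) 1) (hδ : 0 < δstar)
    (hlt : ∀ k : ℕ, 2 ≤ k → δstar * (k : ℝ) ^ (-β) < 1) :
    ∃ C : ℝ, ∃ N : ℕ, ∀ n : ℕ, N ≤ n →
      |∑ j ∈ Finset.Icc 2 n, (j : ℝ) ^ (-r) * ∏ k ∈ Finset.Icc j n, (1 - δstar * (k : ℝ) ^ (-β))|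
        ≤ C * (n : ℝ) ^ (β - r) := by
  obtain ⟨N, hN⟩ := eventually_atTop.1 (eventually_rpow_mul_exp_neg_mul_rpow_le_rpow
    (1 + |r|) (β - r) (sub_pos.2 hβ.2) (half_pos hδ))
  refine ⟨2 ^ |β - r| / δstar + 1, max N 2, fun n hn ↦ ?_⟩
  have hn2 : 2 ≤ n := le_of_max_le_right hn
  have hsplit : Icc 2 n = Icc 2 (n / 2) ∪ Icc (n / 2 + 1) n := by
    ext j; simp only [mem_union, mem_Icc]; omega
  have hhead := sum_Icc_rpow_mul_prod_le_exp r hβ.1 hδ hlt (by omega : 0 < n)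
  have htail := sum_Icc_rpow_mul_prod_le_of_le_two_mul r hδ hlt (by omega : 2 ≤ n / 2 + 1)
    (by omega : n ≤ 2 * (n / 2 + 1))
  have hnonneg : 0 ≤ ∑ j ∈ Icc 2 n, (j : ℝ) ^ (-r) * ∏ k ∈ Icc j n, (1 - δstar * (k : ℝ) ^ (-β)) :=
    sum_nonneg fun j hj ↦ mul_nonneg (by positivity) (prod_Icc_one_sub_nonneg
      (fun k hk ↦ (mul_rpow_neg_nonneg_and_le_one hδ hlt (mem_Icc.1 hk).1).2) j (mem_Icc.1 hj).1)
  have hdisjoint : Disjoint (Icc 2 (n / 2)) (Icc (n / 2 + 1) n) :=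
    disjoint_left.2 fun j hj hj' ↦ by simp only [mem_Icc] at hj hj'; omega
  rw [abs_of_nonneg hnonneg, hsplit, sum_union hdisjoint, add_mul, one_mul]
  linarith [hN n (le_of_max_le_left hn)]
end

section
/- Assume (H1), (H1bis) and (H3). Let {γ_n, n ≥ 0} be (0,1/L]-valued, {S_n, n ≥ 1} any sequence in ℝ^q, and define θ_{n+1} := Prox_{γ_{n+1},g}(θ_n + γ_{n+1}(∇φ(θ_n) + Ψ(θ_n) S_{n+1})), assuming θ_n ∈ Θ for all n. Then there exist finite constants C, C', C'' (depending only on g, ∇φ, Ψ, S̄, Θ and L, not on {S_n}) such that for all n: (i) ‖θ_{n+1} − θ_n‖ ≤ C γ_{n+1} (1 + ‖S_{n+1} − S̄(θ_n)‖); (ii) ‖γ_{n+1} Ψ(θ_n) − γ_n Ψ(θ_{n−1})‖ ≤ C' (|γ_{n+1} − γ_n| + γ_n² (1 + ‖S_n − S̄(θ_{n−1})‖)); (iii) with T_γ(θ) := Prox_{γ,g}(θ + γ(∇φ(θ) + Ψ(θ) S̄(θ))), ‖γ_{n+1} T_{γ_{n+1}}(θ_n) − γ_n T_{γ_n}(θ_{n−1})‖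 ≤ C'' (|γ_{n+1} − γ_n| + γ_n γ_{n+1} + γ_n² (1 + ‖S_n − S̄(θ_{n−1})‖)). -/
open MeasureTheory ProbabilityTheory Filter
open scoped ENNReal NNReal BigOperators RealInnerProductSpace Topology

noncomputable section

namespace SPGP

abbrev Euc (d : ℕ) := EuclideanSpace ℝ (Fin d)

/-- Convexity for `EReal`-valued functions on `ℝ^d`. -/
def ConvexEReal {d : ℕ} (g : Euc d → EReal) : Prop :=
  ∀ x y : Euc d, ∀ a b : ℝ, 0 ≤ a → 0 ≤ b → a + b = 1 →
    g (a • x + b • y) ≤ (a : EReal) * g x + (b : EReal) * g y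

/-- Assumption H1: `g` is `[0,+∞]`-valued, convex, lower semicontinuous and not identically `+∞`. -/
def H1 {d : ℕ} (g : Euc d → EReal) : Prop :=
  ConvexEReal g ∧ LowerSemicontinuous g ∧ (∀ θ, 0 ≤ g θ) ∧ (∃ θ, g θ ≠ ⊤)

/-- `prox γ θ` is the unique minimizer of `τ ↦ g τ + ‖θ - τ‖² / (2γ)`. -/
def IsProx {d : ℕ} (g : Euc d → EReal) (prox : ℝ → Euc d → Euc d) : Prop :=
  ∀ γ : ℝ, 0 < γ → ∀ θ : Euc d,
    (∀ τ, g (prox γ θ) + ((‖θ - prox γ θ‖ ^ 2 / (2 * γ) : ℝ) : EReal)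
        ≤ g τ + ((‖θ - τ‖ ^ 2 / (2 * γ) : ℝ) : EReal)) ∧
    (∀ τ, (∀ τ', g τ + ((‖θ - τ‖ ^ 2 / (2 * γ) : ℝ) : EReal)
        ≤ g τ' + ((‖θ - τ'‖ ^ 2 / (2 * γ) : ℝ) : EReal)) → τ = prox γ θ)

/-- The set `Θ = {θ : g θ + |ℓ θ| < ∞}`. -/
def domSet {d : ℕ} (g ℓ : Euc d → EReal) : Set (Euc d) :=
  {θ | g θ ≠ ⊤ ∧ ℓ θ ≠ ⊥ ∧ ℓ θ ≠ ⊤}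

/-- The set `𝓛 = argmax_{θ ∈ Θ} (ℓ θ - g θ)`. -/
def argmaxPen {d : ℕ} (g ℓ : Euc d → EReal) : Set (Euc d) :=
  {θ | θ ∈ domSet g ℓ ∧ ∀ θ' ∈ domSet g ℓ, ℓ θ' - g θ' ≤ ℓ θ - g θ}

/-- `S̄ θ = ∫ S dπ_θ`. -/
def sbar {Zs : Type*} [MeasurableSpace Zs] {d q : ℕ}
    (πm : Euc d → Measure Zs) (S : Zs → Euc q) (θ : Euc d) : Euc q :=
  ∫ z, S z ∂(πm θ)

/-- Iterates `P^n` of a Markov kernel. -/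
def kIter {Zs : Type*} [MeasurableSpace Zs] (K : Kernel Zs Zs) : ℕ → Kernel Zs Zs
  | 0 => Kernel.id
  | n + 1 => K ∘ₖ kIter K n

/-- `F_n`: the σ-algebra generated by all the draws of iterations `1, …, n`,
i.e. by `Z_{j,k}` for `k ≤ n - 1`, `j ≤ m (k+1)`. -/
def drawFilt {Ω Zs : Type*} [MeasurableSpace Zs] (Zd : ℕ → ℕ → Ω → Zs) (m : ℕ → ℕ)
    (n : ℕ) : MeasurableSpace Ω :=
  ⨆ (k : ℕ) (_ : k < n) (j : ℕ) (_ : j ≤ m (k + 1)), MeasurableSpace.comap (Zd k j) inferInstance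

/-- The σ-algebra generated by `F_n` and `Z_{0,n}, …, Z_{j,n}`. -/
def pathFilt {Ω Zs : Type*} [MeasurableSpace Zs] (Zd : ℕ → ℕ → Ω → Zs) (m : ℕ → ℕ)
    (n j : ℕ) : MeasurableSpace Ω :=
  drawFilt Zd m n ⊔ ⨆ (i : ℕ) (_ : i ≤ j), MeasurableSpace.comap (Zd n i) inferInstance

/-- Conditionally on the past, `Z_{1,n}, …, Z_{m_{n+1},n}` is a path of a Markov chain with
kernel `P (θ_n)` started from `Z_{0,n}`. -/
def IsCondMarkovPath {Ω Zs : Type*} [MeasurableSpace Ω] [MeasurableSpace Zs] {d : ℕ}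
    (μ : Measure Ω) (P : Euc d → Kernel Zs Zs) (θseq : ℕ → Ω → Euc d)
    (Zd : ℕ → ℕ → Ω → Zs) (m : ℕ → ℕ) : Prop :=
  ∀ n j, j < m (n + 1) → ∀ A : Set Zs, MeasurableSet A →
    (MeasureTheory.condExp (pathFilt Zd m n j) μ
        fun ω => A.indicator (fun _ => (1 : ℝ)) (Zd n (j + 1) ω))
      =ᵐ[μ] fun ω => ((P (θseq n ω)) (Zd n j ω) A).toReal

/-- Structural properties of the draws: `Z_{0,0} = z⋆`, `Z_{0,n+1} = Z_{m_{n+1}, n}`,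
and each draw is measurable. -/
def ChainStruct {Ω Zs : Type*} [MeasurableSpace Ω] [MeasurableSpace Zs]
    (Zd : ℕ → ℕ → Ω → Zs) (m : ℕ → ℕ) (zstar : Zs) : Prop :=
  (∀ ω, Zd 0 0 ω = zstar) ∧ (∀ n ω, Zd (n + 1) 0 ω = Zd n (m (n + 1)) ω) ∧
    (∀ n j, Measurable (Zd n j))

/-- Monte Carlo approximation `S^{mc}_{n+1} = m_{n+1}⁻¹ ∑_{j=1}^{m_{n+1}} S (Z_{j,n})`. -/
def mcS {Ω Zs : Type*} {q : ℕ} (S : Zs → Euc q) (Zd : ℕ → ℕ → Ω → Zs) (m : ℕ → ℕ)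
    (n : ℕ) (ω : Ω) : Euc q :=
  (m (n + 1) : ℝ)⁻¹ • ∑ j ∈ Finset.Icc 1 (m (n + 1)), S (Zd n j ω)

/-- Stochastic approximation `S^{sa}_{n+1} = (1 - δ_{n+1}) S^{sa}_n
+ δ_{n+1} m_{n+1}⁻¹ ∑_{j=1}^{m_{n+1}} S (Z_{j,n})`, with `S^{sa}_0 = s⋆`. -/
def saS {Ω Zs : Type*} {q : ℕ} (S : Zs → Euc q) (Zd : ℕ → ℕ → Ω → Zs) (m : ℕ → ℕ)
    (δ : ℕ → ℝ) (s0 : Euc q) : ℕ → Ω → Euc q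
  | 0 => fun _ => s0
  | n + 1 => fun ω =>
      (1 - δ (n + 1)) • saS S Zd m δ s0 n ω
        + (δ (n + 1) * (m (n + 1) : ℝ)⁻¹) • ∑ j ∈ Finset.Icc 1 (m (n + 1)), S (Zd n j ω)

/-- `D_n = ∑_{k ≥ n} ∏_{j=n}^{k} (1 - δ_j)`. -/
def Dseq (δ : ℕ → ℝ) (n : ℕ) : ℝ := ∑' i : ℕ, ∏ j ∈ Finset.Icc n (n + i), (1 - δ j)

/-!
The proximal map of a proper convex `g` is firmly nonexpansive: comparing `Prox_γ(x)` with the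
points of a segment towards `Prox_γ(y)` gives the variational inequality, and adding the two
inequalities gives `‖Prox_γ x - Prox_γ y‖² ≤ ⟪x - y, Prox_γ x - Prox_γ y⟫`. Hence, with the
bound `‖Prox_γ θ - θ‖ ≤ C γ` on `Θ`, a proximal-gradient step with drift `v` moves `θ` by at
most `γ (C + ‖v‖)`. On the bounded set `Θ` the Lipschitz maps `Ψ` and
`θ ↦ ∇φ(θ) + Ψ(θ) S̄(θ)` are bounded, which gives (i); (ii) and (iii) follow from
`b u - a v = (b - a) u + a (u - v)`.
-/
theorem _root_.LipschitzOnWith.isBounded_image {α β : Type*} [PseudoMetricSpace α]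
    [PseudoMetricSpace β] {K : ℝ≥0} {f : α → β} {s : Set α} (hf : LipschitzOnWith K f s)
    (hs : Bornology.IsBounded s) : Bornology.IsBounded (f '' s) := by
  obtain ⟨C, hC⟩ := Metric.isBounded_iff.1 hs
  refine Metric.isBounded_iff.2 ⟨K * C, ?_⟩
  rintro _ ⟨x, hx, rfl⟩ _ ⟨y, hy, rfl⟩
  exact (hf.dist_le_mul x hx y hy).trans (by gcongr; exact hC hx hy)

theorem _root_.Bornology.IsBounded.exists_pos_norm_le_of_norm_sub_le {E F : Type*}
    [SeminormedAddCommGroup E] [SeminormedAddCommGroup F] {s : Set E}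
    (hs : Bornology.IsBounded s) {f : E → F} {L : ℝ}
    (hf : ∀ x ∈ s, ∀ y ∈ s, ‖f x - f y‖ ≤ L * ‖x - y‖) : ∃ M > 0, ∀ x ∈ s, ‖f x‖ ≤ M := by
  simp only [← dist_eq_norm] at hf
  simpa using ((LipschitzOnWith.of_dist_le' hf).isBounded_image hs).exists_pos_norm_le

theorem norm_smul_sub_smul_le {F : Type*} [SeminormedAddCommGroup F] [NormedSpace ℝ F]
    {a : ℝ} (ha : 0 ≤ a) (b : ℝ) (u v : F) :
    ‖b • u - a • v‖ ≤ |b - a| * ‖u‖ + a * ‖u - v‖ :=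
  calc ‖b • u - a • v‖ = ‖(b - a) • u + a • (u - v)‖ := by congr 1; module
    _ ≤ |b - a| * ‖u‖ + a * ‖u - v‖ := by
      refine (norm_add_le _ _).trans_eq ?_
      rw [norm_smul, norm_smul, Real.norm_eq_abs, Real.norm_of_nonneg ha]

section SmulIncrement

variable {F : Type*} [SeminormedAddCommGroup F] [NormedSpace ℝ F] {a b M A B Δ : ℝ} {u v : F}

theorem norm_smul_sub_smul_le_of_norm_sub_le (ha : 0 ≤ a) (hM : 0 ≤ M) (hB : 0 ≤ B)
    (hΔ : 0 ≤ Δ) (hu : ‖u‖ ≤ M) (huv : ‖u - v‖ ≤ B * a * (1 + Δ)) :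
    ‖b • u - a • v‖ ≤ (M + B) * (|b - a| + a ^ 2 * (1 + Δ)) :=
  calc ‖b • u - a • v‖ ≤ |b - a| * M + a * (B * a * (1 + Δ)) :=
        (norm_smul_sub_smul_le ha b u v).trans (by gcongr)
    _ ≤ (M + B) * (|b - a| + a ^ 2 * (1 + Δ)) := by
        nlinarith [mul_nonneg hM (mul_nonneg (sq_nonneg a) (by linarith : 0 ≤ 1 + Δ)),
          mul_nonneg hB (abs_nonneg (b - a))]

theorem norm_smul_sub_smul_le_of_norm_sub_le_add (ha : 0 ≤ a) (hb : 0 ≤ b) (hM : 0 ≤ M)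
    (hA : 0 ≤ A) (hB : 0 ≤ B) (hΔ : 0 ≤ Δ) (hu : ‖u‖ ≤ M)
    (huv : ‖u - v‖ ≤ A * b + B * a * (1 + Δ)) :
    ‖b • u - a • v‖ ≤ (M + A + B) * (|b - a| + a * b + a ^ 2 * (1 + Δ)) :=
  calc ‖b • u - a • v‖ ≤ |b - a| * M + a * (A * b + B * a * (1 + Δ)) :=
        (norm_smul_sub_smul_le ha b u v).trans (by gcongr)
    _ ≤ (M + A + B) * (|b - a| + a * b + a ^ 2 * (1 + Δ)) := by
        have hab : 0 ≤ a * b := mul_nonneg ha hb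
        have hsq : 0 ≤ a ^ 2 * (1 + Δ) := mul_nonneg (sq_nonneg a) (by linarith)
        nlinarith [mul_nonneg hM hab, mul_nonneg hM hsq, mul_nonneg hA (abs_nonneg (b - a)),
          mul_nonneg hA hsq, mul_nonneg hB (abs_nonneg (b - a)), mul_nonneg hB hab]

theorem norm_smul_sub_smul_le_of_norm_sub_le_of_near {x₀ x₁ : F} (ha : 0 ≤ a) (hb : 0 ≤ b)
    (hM : 0 ≤ M) (hA : 0 ≤ A) (hB : 0 ≤ B) (hΔ : 0 ≤ Δ) (hu : ‖u‖ ≤ M)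
    (hu₁ : ‖u - x₁‖ ≤ A * b) (hv₀ : ‖v - x₀‖ ≤ A * a) (hx : ‖x₁ - x₀‖ ≤ B * a * (1 + Δ)) :
    ‖b • u - a • v‖ ≤ (M + A + (A + B)) * (|b - a| + a * b + a ^ 2 * (1 + Δ)) := by
  refine norm_smul_sub_smul_le_of_norm_sub_le_add ha hb hM hA (by positivity) hΔ hu ?_
  calc ‖u - v‖ ≤ ‖u - x₁‖ + ‖x₁ - x₀‖ + ‖v - x₀‖ := by
        simpa only [dist_eq_norm, norm_sub_rev x₀ v] using dist_triangle4 u x₁ x₀ v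
    _ ≤ A * b + B * a * (1 + Δ) + A * a := by gcongr
    _ ≤ A * b + (A + B) * a * (1 + Δ) := by nlinarith [mul_nonneg (mul_nonneg hA ha) hΔ]

end SmulIncrement

namespace IsProx

variable {d : ℕ} {g : Euc d → EReal} {prox : ℝ → Euc d → Euc d} {γ : ℝ}

theorem apply_ne_top (hprox : IsProx g prox) (hγ : 0 < γ) (x : Euc d) {τ : Euc d}
    (hτ : g τ ≠ ⊤) : g (prox γ x) ≠ ⊤ := by
  intro htop
  have h := (hprox γ hγ x).1 τ
  rw [htop, EReal.top_add_coe, top_le_iff] at h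
  exact (EReal.add_lt_top hτ (EReal.coe_ne_top _)).ne h

theorem toReal_add_le (hprox : IsProx g prox) (hg_bot : ∀ θ, g θ ≠ ⊥) (hγ : 0 < γ)
    (x : Euc d) {τ : Euc d} {r : ℝ} (hτ : g τ ≤ r) :
    (g (prox γ x)).toReal + ‖x - prox γ x‖ ^ 2 / (2 * γ) ≤ r + ‖x - τ‖ ^ 2 / (2 * γ) := by
  have hfin := hprox.apply_ne_top hγ x (ne_top_of_le_ne_top (EReal.coe_ne_top r) hτ)
  have h := ((hprox γ hγ x).1 τ).trans (add_le_add_left hτ _)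
  rw [← EReal.coe_toReal hfin (hg_bot _)] at h
  exact_mod_cast h

/-- The variational inequality `(x - prox γ x) / γ ∈ ∂g (prox γ x)`. -/
theorem inner_sub_le (hprox : IsProx g prox) (hg : ConvexEReal g) (hg_bot : ∀ θ, g θ ≠ ⊥)
    (hγ : 0 < γ) (x : Euc d) {τ : Euc d} (hτ : g τ ≠ ⊤) :
    ⟪x - prox γ x, τ - prox γ x⟫ ≤ γ * ((g τ).toReal - (g (prox γ x)).toReal) := by
  set p := prox γ x
  set a := (g p).toReal
  set b := (g τ).toReal
  have ha : g p = a := (EReal.coe_toReal (hprox.apply_ne_top hγ x hτ) (hg_bot p)).symm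
  have hb : g τ = b := (EReal.coe_toReal hτ (hg_bot τ)).symm
  -- compare `p` with the points of the segment `[p, τ]` and let them tend to `p`
  have hseg : ∀ t ∈ Set.Ioc (0 : ℝ) 1,
      2 * (⟪x - p, τ - p⟫ - γ * (b - a)) ≤ t * ‖τ - p‖ ^ 2 := by
    rintro t ⟨ht0, ht1⟩
    have hconv : g ((1 - t) • p + t • τ) ≤ ((1 - t) * a + t * b : ℝ) := by
      have := hg p τ (1 - t) t (by linarith) ht0.le (by ring)
      rw [ha, hb] at this
      exact_mod_cast this
    have hmin : a + ‖x - p‖ ^ 2 / (2 * γ)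
        ≤ (1 - t) * a + t * b + ‖x - ((1 - t) • p + t • τ)‖ ^ 2 / (2 * γ) :=
      hprox.toReal_add_le hg_bot hγ x hconv
    rw [show x - ((1 - t) • p + t • τ) = (x - p) - t • (τ - p) by module,
      norm_sub_sq_real (x - p), real_inner_smul_right, norm_smul, Real.norm_eq_abs, mul_pow,
      sq_abs] at hmin
    have h2γ : (0 : ℝ) < 2 * γ := by positivity
    have hmul : t * (2 * (⟪x - p, τ - p⟫ - γ * (b - a))) ≤ t * (t * ‖τ - p‖ ^ 2) := by
      rw [← sub_nonneg] at hmin ⊢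
      have := mul_nonneg hmin h2γ.le
      field_simp at this
      nlinarith
    exact le_of_mul_le_mul_left hmul ht0
  have hlim : Tendsto (fun t : ℝ => t * ‖τ - p‖ ^ 2) (𝓝[>] 0) (𝓝 0) := by
    simpa using (tendsto_id.mul_const (‖τ - p‖ ^ 2)).mono_left (nhdsWithin_le_nhds (a := (0 : ℝ)))
  linarith [ge_of_tendsto hlim (Filter.mem_of_superset (Ioc_mem_nhdsGT one_pos) hseg)]

theorem sq_norm_sub_le_inner (hprox : IsProx g prox) (hg : ConvexEReal g)
    (hg_bot : ∀ θ, g θ ≠ ⊥) (hg_proper : ∃ θ, g θ ≠ ⊤) (hγ : 0 < γ) (x y : Euc d) :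
    ‖prox γ x - prox γ y‖ ^ 2 ≤ ⟪x - y, prox γ x - prox γ y⟫ := by
  obtain ⟨τ, hτ⟩ := hg_proper
  have hx := hprox.inner_sub_le hg hg_bot hγ x (hprox.apply_ne_top hγ y hτ)
  have hy := hprox.inner_sub_le hg hg_bot hγ y (hprox.apply_ne_top hγ x hτ)
  rw [← real_inner_self_eq_norm_sq]
  simp only [inner_sub_left, inner_sub_right, real_inner_comm] at hx hy ⊢
  nlinarith

theorem norm_sub_le (hprox : IsProx g prox) (hg : ConvexEReal g) (hg_bot : ∀ θ, g θ ≠ ⊥)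
    (hg_proper : ∃ θ, g θ ≠ ⊤) (hγ : 0 < γ) (x y : Euc d) :
    ‖prox γ x - prox γ y‖ ≤ ‖x - y‖ := by
  have h := (hprox.sq_norm_sub_le_inner hg hg_bot hg_proper hγ x y).trans
    (real_inner_le_norm _ _)
  nlinarith [norm_nonneg (prox γ x - prox γ y), norm_nonneg (x - y)]

theorem norm_apply_add_smul_sub_le (hprox : IsProx g prox) (hg : ConvexEReal g)
    (hg_bot : ∀ θ, g θ ≠ ⊥) (hg_proper : ∃ θ, g θ ≠ ⊤) (hγ : 0 < γ) {θ : Euc d} {Cp : ℝ}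
    (hCp : ‖prox γ θ - θ‖ ≤ Cp * γ) (v : Euc d) :
    ‖prox γ (θ + γ • v) - θ‖ ≤ γ * (Cp + ‖v‖) :=
  calc ‖prox γ (θ + γ • v) - θ‖ = ‖(prox γ (θ + γ • v) - prox γ θ) + (prox γ θ - θ)‖ := by
        rw [sub_add_sub_cancel]
    _ ≤ ‖θ + γ • v - θ‖ + Cp * γ :=
        norm_add_le_of_le (hprox.norm_sub_le hg hg_bot hg_proper hγ _ _) hCp
    _ = γ * (Cp + ‖v‖) := by
        rw [add_sub_cancel_left, norm_smul, Real.norm_of_nonneg hγ.le]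
        ring

end IsProx

/-- With `θ = θ_n`, `s = S_{n+1}` this is `θ_{n+1}`; with `s = S̄(θ)` it is `T_γ(θ)`. -/
def proxGradStep {d q : ℕ} (prox : ℝ → Euc d → Euc d) (Gφ : Euc d → Euc d)
    (Ψ : Euc d → (Euc q →L[ℝ] Euc d)) (γ : ℝ) (θ : Euc d) (s : Euc q) : Euc d :=
  prox γ (θ + γ • (Gφ θ + Ψ θ s))

theorem norm_proxGradStep_sub_le {d q : ℕ} {g : Euc d → EReal} {prox : ℝ → Euc d → Euc d}
    {Gφ : Euc d → Euc d} {Ψ : Euc d → (Euc q →L[ℝ] Euc d)} (hprox : IsProx g prox)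
    (hg : ConvexEReal g) (hg_bot : ∀ θ, g θ ≠ ⊥) (hg_proper : ∃ θ, g θ ≠ ⊤) {γ : ℝ}
    (hγ : 0 < γ) {θ : Euc d} {s₀ : Euc q} {Cp Mw MΨ : ℝ} (hCp : ‖prox γ θ - θ‖ ≤ Cp * γ)
    (hw : ‖Gφ θ + Ψ θ s₀‖ ≤ Mw) (hΨ : ‖Ψ θ‖ ≤ MΨ) (s : Euc q) :
    ‖proxGradStep prox Gφ Ψ γ θ s - θ‖ ≤ γ * (Cp + Mw + MΨ * ‖s - s₀‖) := by
  have hv : ‖Gφ θ + Ψ θ s‖ ≤ Mw + MΨ * ‖s - s₀‖ :=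
    calc ‖Gφ θ + Ψ θ s‖ = ‖(Gφ θ + Ψ θ s₀) + Ψ θ (s - s₀)‖ := by rw [map_sub]; abel_nf
      _ ≤ Mw + MΨ * ‖s - s₀‖ :=
        norm_add_le_of_le hw (((Ψ θ).le_opNorm _).trans (by gcongr))
  calc ‖proxGradStep prox Gφ Ψ γ θ s - θ‖ ≤ γ * (Cp + ‖Gφ θ + Ψ θ s‖) :=
        hprox.norm_apply_add_smul_sub_le hg hg_bot hg_proper hγ hCp _
    _ ≤ γ * (Cp + Mw + MΨ * ‖s - s₀‖) := by rw [add_assoc]; gcongr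

theorem exists_norm_proxGradStep_sub_le {d q : ℕ} {g : Euc d → EReal}
    {prox : ℝ → Euc d → Euc d} {Gφ : Euc d → Euc d} {Ψ : Euc d → (Euc q →L[ℝ] Euc d)}
    (hprox : IsProx g prox) (hg : ConvexEReal g) (hg_bot : ∀ θ, g θ ≠ ⊥)
    (hg_proper : ∃ θ, g θ ≠ ⊤) {Θ : Set (Euc d)} (hΘ : Bornology.IsBounded Θ)
    {Sb : Euc d → Euc q} {L : ℝ}
    (hw : ∀ θ ∈ Θ, ∀ θ' ∈ Θ, ‖(Gφ θ + Ψ θ (Sb θ)) - (Gφ θ' + Ψ θ' (Sb θ'))‖ ≤ L * ‖θ - θ'‖)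
    {MΨ : ℝ} (hΨ : ∀ θ ∈ Θ, ‖Ψ θ‖ ≤ MΨ) {I : Set ℝ} (hI : I ⊆ Set.Ioi 0) {Cp : ℝ}
    (hCp : ∀ γ ∈ I, ∀ θ ∈ Θ, ‖prox γ θ - θ‖ ≤ Cp * γ) :
    ∃ K ≥ 0, ∀ γ ∈ I, ∀ θ ∈ Θ, ∀ s,
      ‖proxGradStep prox Gφ Ψ γ θ s - θ‖ ≤ γ * (K + MΨ * ‖s - Sb θ‖) := by
  obtain ⟨Mw, hMw0, hMw⟩ := hΘ.exists_pos_norm_le_of_norm_sub_le hw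
  refine ⟨max Cp 0 + Mw, by positivity, fun γ hγ θ hθ s => ?_⟩
  have hγ0 : 0 < γ := hI hγ
  exact norm_proxGradStep_sub_le hprox hg hg_bot hg_proper hγ0
    ((hCp γ hγ θ hθ).trans (by gcongr; exact le_max_left _ _)) (hMw θ hθ) (hΨ θ hθ) s

theorem stmt13_general {Zs : Type*} [MeasurableSpace Zs] {d q : ℕ}
    (g ℓ : Euc d → EReal)
    (Gφ : Euc d → Euc d) (Ψ : Euc d → (Euc q →L[ℝ] Euc d)) (S : Zs → Euc q)
    (πm : Euc d → Measure Zs)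
    -- H1
    (hg_conv : ConvexEReal g)
    (hg_nonneg : ∀ θ, 0 ≤ g θ) (hg_proper : ∃ θ, g θ ≠ ⊤)
    -- H1bis
    (L : ℝ) (hL : 0 < L)
    (hLipgrad : ∀ θ ∈ domSet g ℓ, ∀ θ' ∈ domSet g ℓ,
      ‖(Gφ θ + Ψ θ (sbar πm S θ)) - (Gφ θ' + Ψ θ' (sbar πm S θ'))‖ ≤ L * ‖θ - θ'‖)
    -- H3
    (hΘbdd : Bornology.IsBounded (domSet g ℓ))
    (hLip3 : ∀ θ ∈ domSet g ℓ, ∀ θ' ∈ domSet g ℓ,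
      ‖Gφ θ - Gφ θ'‖ + ‖Ψ θ - Ψ θ'‖ + ‖sbar πm S θ - sbar πm S θ'‖ ≤ L * ‖θ - θ'‖)
    (prox : ℝ → Euc d → Euc d) (hprox : IsProx g prox)
    (hproxbd : ∃ Cp : ℝ, ∀ γ' ∈ Set.Ioc (0 : ℝ) (1 / L), ∀ θ ∈ domSet g ℓ,
      ‖prox γ' θ - θ‖ ≤ Cp * γ')
    -- step sizes
    (γ : ℕ → ℝ) (hγ : ∀ n, γ n ∈ Set.Ioc (0 : ℝ) (1 / L)) :
    ∃ C C' C'' : ℝ, ∀ (Sseq : ℕ → Euc q) (θseq : ℕ → Euc d),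
      (∀ n : ℕ, θseq (n + 1)
        = prox (γ (n + 1)) (θseq n + γ (n + 1) • (Gφ (θseq n) + Ψ (θseq n) (Sseq (n + 1))))) →
      (∀ n, θseq n ∈ domSet g ℓ) →
      ∀ n : ℕ,
        ‖θseq (n + 1) - θseq n‖
            ≤ C * γ (n + 1) * (1 + ‖Sseq (n + 1) - sbar πm S (θseq n)‖) ∧
          ‖γ (n + 2) • Ψ (θseq (n + 1)) - γ (n + 1) • Ψ (θseq n)‖
            ≤ C' * (|γ (n + 2) - γ (n + 1)|
                + γ (n + 1) ^ 2 * (1 + ‖Sseq (n + 1) - sbar πm S (θseq n)‖)) ∧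
          ‖γ (n + 2) • prox (γ (n + 2))
                (θseq (n + 1)
                  + γ (n + 2) • (Gφ (θseq (n + 1)) + Ψ (θseq (n + 1)) (sbar πm S (θseq (n + 1)))))
              - γ (n + 1) • prox (γ (n + 1))
                (θseq n + γ (n + 1) • (Gφ (θseq n) + Ψ (θseq n) (sbar πm S (θseq n))))‖
            ≤ C'' * (|γ (n + 2) - γ (n + 1)| + γ (n + 1) * γ (n + 2)
                + γ (n + 1) ^ 2 * (1 + ‖Sseq (n + 1) - sbar πm S (θseq n)‖)) := by
  have hg_bot : ∀ θ, g θ ≠ ⊥ := fun θ => ne_bot_of_le_ne_bot EReal.zero_ne_bot (hg_nonneg θ)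
  have hΨ_lip : ∀ θ ∈ domSet g ℓ, ∀ θ' ∈ domSet g ℓ, ‖Ψ θ - Ψ θ'‖ ≤ L * ‖θ - θ'‖ :=
    fun θ hθ θ' hθ' => by
      linarith [hLip3 θ hθ θ' hθ', norm_nonneg (Gφ θ - Gφ θ'),
        norm_nonneg (sbar πm S θ - sbar πm S θ')]
  obtain ⟨R, hR0, hR⟩ := hΘbdd.exists_pos_norm_le
  obtain ⟨MΨ, hMΨ0, hMΨ⟩ := hΘbdd.exists_pos_norm_le_of_norm_sub_le hΨ_lip
  obtain ⟨Cp, hCp⟩ := hproxbd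
  obtain ⟨K, hK, hstep⟩ := exists_norm_proxGradStep_sub_le hprox hg_conv hg_bot hg_proper hΘbdd
    hLipgrad hMΨ (fun _ h => h.1) hCp
  refine ⟨K + MΨ, MΨ + L * (K + MΨ), R + K * (1 / L) + K + (K + (K + MΨ)),
    fun Sseq θseq hrec hΘ n => ?_⟩
  have hγ₁ := (hγ (n + 1)).1
  obtain ⟨hγ₂, hγ₂L⟩ := hγ (n + 2)
  set Δ := ‖Sseq (n + 1) - sbar πm S (θseq n)‖
  have hΔ : 0 ≤ Δ := norm_nonneg _
  have hincr : ‖θseq (n + 1) - θseq n‖ ≤ (K + MΨ) * γ (n + 1) * (1 + Δ) := by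
    rw [hrec n]
    refine (hstep _ (hγ (n + 1)) _ (hΘ n) _).trans ?_
    nlinarith [mul_nonneg (mul_nonneg hK hγ₁.le) hΔ, mul_nonneg hMΨ0.le hγ₁.le]
  refine ⟨hincr, ?_, ?_⟩
  · refine norm_smul_sub_smul_le_of_norm_sub_le hγ₁.le hMΨ0.le (by positivity) hΔ
      (hMΨ _ (hΘ _)) ((hΨ_lip _ (hΘ _) _ (hΘ _)).trans ?_)
    calc L * ‖θseq (n + 1) - θseq n‖ ≤ L * ((K + MΨ) * γ (n + 1) * (1 + Δ)) := by gcongr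
      _ = L * (K + MΨ) * γ (n + 1) * (1 + Δ) := by ring
  · have hT : ∀ m, ‖proxGradStep prox Gφ Ψ (γ (m + 1)) (θseq m) (sbar πm S (θseq m)) - θseq m‖
        ≤ K * γ (m + 1) := fun m => by
      simpa [mul_comm] using hstep _ (hγ (m + 1)) _ (hΘ m) (sbar πm S (θseq m))
    exact norm_smul_sub_smul_le_of_norm_sub_le_of_near hγ₁.le hγ₂.le (by positivity) hK
      (by positivity) hΔ ((norm_le_norm_add_norm_sub' _ _).trans
        (add_le_add (hR _ (hΘ _)) ((hT (n + 1)).trans (by gcongr)))) (hT (n + 1)) (hT n) hincr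

/-- **Bounds on the proximal-gradient iterates** (Lemma 8). Under H1, H1bis and H3, for
`(0,1/L]`-valued step sizes and any driving sequence `{S_n}` with `Θ`-valued iterates, there
are constants `C, C', C''` not depending on `{S_n}` such that the increments of `θ_n`,
of `γ_{n+1} Ψ(θ_n)` and of `γ_{n+1} T_{γ_{n+1}}(θ_n)` satisfy the stated bounds, where
`T_γ(θ) = Prox_{γ,g}(θ + γ(∇φ(θ) + Ψ(θ) S̄(θ)))`. -/
theorem stmt13 {Zs : Type*} [MeasurableSpace Zs] {d q : ℕ}
    (ν : Measure Zs) [SigmaFinite ν]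
    (g ℓ : Euc d → EReal) (ℓr : Euc d → ℝ)
    (Gφ : Euc d → Euc d) (Ψ : Euc d → (Euc q →L[ℝ] Euc d)) (S : Zs → Euc q)
    (πdens : Euc d → Zs → ℝ≥0∞) (πm : Euc d → Measure Zs)
    (hπm : ∀ θ, πm θ = ν.withDensity (πdens θ))
    (hprob : ∀ θ, IsProbabilityMeasure (πm θ))
    -- H1
    (hg_conv : ConvexEReal g) (hg_lsc : LowerSemicontinuous g)
    (hg_nonneg : ∀ θ, 0 ≤ g θ) (hg_proper : ∃ θ, g θ ≠ ⊤)
    -- H1bis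
    (hl_ne_top : ∀ θ, ℓ θ ≠ ⊤)
    (hlr : ∀ θ ∈ domSet g ℓ, (ℓr θ : EReal) = ℓ θ)
    (hGφ_meas : Measurable Gφ) (hΨ_meas : ∀ v, Measurable fun θ => Ψ θ v)
    (hS_meas : Measurable S)
    (hgrad : ∀ θ ∈ domSet g ℓ, HasGradientAt ℓr (Gφ θ + Ψ θ (sbar πm S θ)) θ)
    (L : ℝ) (hL : 0 < L)
    (hLipgrad : ∀ θ ∈ domSet g ℓ, ∀ θ' ∈ domSet g ℓ,
      ‖(Gφ θ + Ψ θ (sbar πm S θ)) - (Gφ θ' + Ψ θ' (sbar πm S θ'))‖ ≤ L * ‖θ - θ'‖)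
    -- H3
    (hconc : ConcaveOn ℝ (domSet g ℓ) ℓr)
    (hArg : (argmaxPen g ℓ).Nonempty)
    (hΘbdd : Bornology.IsBounded (domSet g ℓ))
    (hLip3 : ∀ θ ∈ domSet g ℓ, ∀ θ' ∈ domSet g ℓ,
      ‖Gφ θ - Gφ θ'‖ + ‖Ψ θ - Ψ θ'‖ + ‖sbar πm S θ - sbar πm S θ'‖ ≤ L * ‖θ - θ'‖)
    (prox : ℝ → Euc d → Euc d) (hprox : IsProx g prox)
    (hproxbd : ∃ Cp : ℝ, ∀ γ' ∈ Set.Ioc (0 : ℝ) (1 / L), ∀ θ ∈ domSet g ℓ,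
      ‖prox γ' θ - θ‖ ≤ Cp * γ')
    -- step sizes
    (γ : ℕ → ℝ) (hγ : ∀ n, γ n ∈ Set.Ioc (0 : ℝ) (1 / L)) :
    ∃ C C' C'' : ℝ, ∀ (Sseq : ℕ → Euc q) (θseq : ℕ → Euc d),
      (∀ n : ℕ, θseq (n + 1)
        = prox (γ (n + 1)) (θseq n + γ (n + 1) • (Gφ (θseq n) + Ψ (θseq n) (Sseq (n + 1))))) →
      (∀ n, θseq n ∈ domSet g ℓ) →
      ∀ n : ℕ,
        ‖θseq (n + 1) - θseq n‖
            ≤ C * γ (n + 1) * (1 + ‖Sseq (n + 1) - sbar πm S (θseq n)‖) ∧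
          ‖γ (n + 2) • Ψ (θseq (n + 1)) - γ (n + 1) • Ψ (θseq n)‖
            ≤ C' * (|γ (n + 2) - γ (n + 1)|
                + γ (n + 1) ^ 2 * (1 + ‖Sseq (n + 1) - sbar πm S (θseq n)‖)) ∧
          ‖γ (n + 2) • prox (γ (n + 2))
                (θseq (n + 1)
                  + γ (n + 2) • (Gφ (θseq (n + 1)) + Ψ (θseq (n + 1)) (sbar πm S (θseq (n + 1)))))
              - γ (n + 1) • prox (γ (n + 1))
                (θseq n + γ (n + 1) • (Gφ (θseq n) + Ψ (θseq n) (sbar πm S (θseq n))))‖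
            ≤ C'' * (|γ (n + 2) - γ (n + 1)| + γ (n + 1) * γ (n + 2)
                + γ (n + 1) ^ 2 * (1 + ‖Sseq (n + 1) - sbar πm S (θseq n)‖)) :=
  stmt13_general g ℓ Gφ Ψ S πm hg_conv hg_nonneg hg_proper L hL hLipgrad hΘbdd hLip3 prox hprox
    hproxbd γ hγ

end SPGP
end
end

section
/- Let β ∈ [0,1), r ∈ ℝ and D > 0. Then there exists a finite constant C (depending on β, r, D) such that for all n ≥ 2, Σ_{j=2}^{n} j^{−r} exp(D j^{1−β}) ≤ C exp(D n^{1−β}) n^{β − r}. -/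
/-!
With `p = 1 - β` and `s = β - r` put `G x = exp (D x^p) x^s`; the `j`-th summand is
`j^(p-1) G j`. By Bernoulli's inequality `x^p - (x-1)^p ≥ p x^(p-1)`, while
`log x - log (x-1) = O(1/x)`, so `log G` increases from `x - 1` to `x` by at least
`(D p / 2) x^(p-1)` once `x` is large. Hence eventually `G x - G (x-1) ≥ c x^(p-1) G x`: the
summands are dominated by the increments of `G` and the sum telescopes, the finitely many
remaining `n` being absorbed into the constant.
-/

open Real Filter Finset

theorem mul_rpow_sub_one_le_rpow_sub_rpow_sub_one {p x : ℝ} (hp0 : 0 ≤ p) (hp1 : p ≤ 1)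
    (hx : 1 ≤ x) : p * x ^ (p - 1) ≤ x ^ p - (x - 1) ^ p := by
  have hx0 : 0 < x := by linarith
  have hbern : (1 + -x⁻¹) ^ p ≤ 1 + p * -x⁻¹ :=
    rpow_one_add_le_one_add_mul_self (by linarith [inv_le_one_of_one_le₀ hx]) hp0 hp1
  have hsplit : (x - 1) ^ p = x ^ p * (1 + -x⁻¹) ^ p := by
    rw [← mul_rpow hx0.le (by linarith [inv_le_one_of_one_le₀ hx])]
    congr 1
    field_simp
    ring
  rw [hsplit, rpow_sub_one hx0.ne']
  have := mul_le_mul_of_nonneg_left hbern (rpow_nonneg hx0.le p)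
  linarith [show x ^ p * (1 + p * -x⁻¹) = x ^ p - p * (x ^ p / x) by ring]

theorem abs_log_sub_log_sub_one_le {x : ℝ} (hx : 2 ≤ x) : |log x - log (x - 1)| ≤ 2 / x := by
  have hx1 : 0 < x - 1 := by linarith
  have hmono : log (x - 1) ≤ log x := log_le_log hx1 (by linarith)
  have hupper : log x - log (x - 1) ≤ 1 / (x - 1) := by
    rw [← log_div (by linarith) hx1.ne']
    calc log (x / (x - 1)) ≤ x / (x - 1) - 1 := log_le_sub_one_of_pos (by positivity)
      _ = 1 / (x - 1) := by field_simp; ring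
  rw [abs_of_nonneg (by linarith)]
  refine hupper.trans ?_
  rw [div_le_div_iff₀ hx1 (by linarith)]
  linarith

theorem exp_mul_div_one_add_le_exp_sub_exp {a b v : ℝ} (hv : 0 ≤ v) (h : v ≤ a - b) :
    exp a * (v / (1 + v)) ≤ exp a - exp b := by
  have hb : exp b * (1 + v) ≤ exp a :=
    calc exp b * (1 + v) ≤ exp b * exp v := by gcongr; linarith [add_one_le_exp v]
      _ ≤ exp b * exp (a - b) := by gcongr
      _ = exp a := by rw [← exp_add]; ring_nf
  rw [mul_div_assoc', div_le_iff₀ (by linarith)]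
  nlinarith

theorem exp_mul_rpow_eq_exp_add_mul_log (a s : ℝ) {x : ℝ} (hx : 0 < x) :
    exp a * x ^ s = exp (a + s * log x) := by
  rw [exp_add, mul_comm s, ← rpow_def_of_pos hx]

theorem exists_pos_eventually_mul_le_exp_mul_rpow_sub {p s D : ℝ} (hp0 : 0 < p) (hp1 : p ≤ 1)
    (hD : 0 < D) :
    ∃ c > 0, ∀ᶠ x : ℝ in atTop, c * (x ^ (p - 1) * (exp (D * x ^ p) * x ^ s)) ≤
      exp (D * x ^ p) * x ^ s - exp (D * (x - 1) ^ p) * (x - 1) ^ s := by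
  set M := D * p / 2
  have hM : 0 < M := by positivity
  refine ⟨M / (1 + M), by positivity, ?_⟩
  filter_upwards [(tendsto_rpow_atTop hp0).eventually_ge_atTop (2 * |s| / M),
    eventually_ge_atTop 2] with x hxp hx2
  have hx0 : 0 < x := by linarith
  set t := x ^ (p - 1)
  have htx : t = x ^ p / x := rpow_sub_one hx0.ne' p
  have ht0 : 0 ≤ t := rpow_nonneg hx0.le _
  have ht1 : t ≤ 1 := rpow_le_one_of_one_le_of_nonpos (by linarith) (by linarith)
  have hpow : D * (p * t) ≤ D * (x ^ p - (x - 1) ^ p) :=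
    mul_le_mul_of_nonneg_left
      (mul_rpow_sub_one_le_rpow_sub_rpow_sub_one hp0.le hp1 (by linarith)) hD.le
  -- the `x ^ s` factor shifts the exponent by `O(1/x)`, which is at most half of `D p x^(p-1)`
  have hlog : -(M * t) ≤ s * (log x - log (x - 1)) := by
    have hMt : 2 * |s| / x ≤ M * t := by
      rw [htx, div_le_iff₀ hx0]
      rw [div_le_iff₀ hM] at hxp
      field_simp
      linarith
    have := mul_le_mul_of_nonneg_left (abs_log_sub_log_sub_one_le hx2) (abs_nonneg s)
    rw [← abs_mul] at this
    linarith [neg_abs_le (s * (log x - log (x - 1))), show |s| * (2 / x) = 2 * |s| / x by ring]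
  have hgap : M * t ≤ (D * x ^ p + s * log x) - (D * (x - 1) ^ p + s * log (x - 1)) := by
    linarith [show M * t = D * (p * t) / 2 by ring]
  rw [exp_mul_rpow_eq_exp_add_mul_log _ _ hx0,
    exp_mul_rpow_eq_exp_add_mul_log _ _ (by linarith : 0 < x - 1)]
  refine le_trans ?_ (exp_mul_div_one_add_le_exp_sub_exp (by positivity) hgap)
  have hbound : M / (1 + M) * t ≤ M * t / (1 + M * t) := by
    rw [div_mul_eq_mul_div]
    gcongr
    nlinarith
  nlinarith [exp_pos (D * x ^ p + s * log x)]

theorem exists_sum_Icc_le_mul_of_eventually {a G : ℕ → ℝ} {m : ℕ} {c : ℝ} (hc : 0 < c)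
    (ha : ∀ n, 0 ≤ a n) (hG : ∀ n, m ≤ n → 0 < G n)
    (hstep : ∀ᶠ n in atTop, c * a (n + 1) ≤ G (n + 1) - G n) :
    ∃ C, ∀ n, m ≤ n → ∑ j ∈ Icc m n, a j ≤ C * G n := by
  obtain ⟨N, hN⟩ := eventually_atTop.mp (hstep.and (eventually_ge_atTop m))
  set S : ℕ → ℝ := fun n ↦ ∑ j ∈ Icc m n, a j
  have hS : ∀ n, 0 ≤ S n := fun n ↦ sum_nonneg fun j _ ↦ ha j
  set C := 1 / c + ∑ k ∈ Icc m N, S k / G k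
  have hinit : ∀ n ∈ Icc m N, S n ≤ C * G n := by
    intro n hn
    have hGn := hG n (mem_Icc.mp hn).1
    have hle : S n / G n ≤ C := by
      have := single_le_sum (fun k hk ↦ div_nonneg (hS k) (hG k (mem_Icc.mp hk).1).le) hn
      have : 0 ≤ 1 / c := by positivity
      linarith
    calc S n = S n / G n * G n := by field_simp
      _ ≤ C * G n := by gcongr
  refine ⟨C, fun n hn ↦ ?_⟩
  induction n, hn using Nat.le_induction with
  | base => exact hinit m (mem_Icc.mpr ⟨le_rfl, (hN N le_rfl).2⟩)
  | succ n hmn ih =>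
    rcases le_or_gt (n + 1) N with hle | hgt
    · exact hinit (n + 1) (mem_Icc.mpr ⟨by omega, hle⟩)
    · have h := (hN n (by omega)).1
      have hmono : 0 ≤ G (n + 1) - G n := le_trans (by nlinarith [ha (n + 1)]) h
      have hC : 1 / c ≤ C := le_add_of_nonneg_right
        (sum_nonneg fun k hk ↦ div_nonneg (hS k) (hG k (mem_Icc.mp hk).1).le)
      have ha' : a (n + 1) ≤ 1 / c * (G (n + 1) - G n) := by
        rw [div_mul_eq_mul_div, one_mul, le_div_iff₀ hc]; linarith
      calc S (n + 1) = S n + a (n + 1) := sum_Icc_succ_top (by omega) a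
        _ ≤ C * G n + C * (G (n + 1) - G n) := by
            gcongr
            exact ha'.trans (mul_le_mul_of_nonneg_right hC hmono)
        _ = C * G (n + 1) := by ring

/-- Let `β ∈ [0,1)`, `r ∈ ℝ` and `D > 0`. Then there exists a finite constant `C` such that for
all `n ≥ 2`, `∑_{j=2}^{n} j^{-r} exp(D j^{1-β}) ≤ C exp(D n^{1-β}) n^{β - r}`. -/
theorem stmt17 (β r D : ℝ) (hβ : β ∈ Set.Ico (0 : ℝ) 1) (hD : 0 < D) :
    ∃ C : ℝ, ∀ n : ℕ, 2 ≤ n →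
      ∑ j ∈ Finset.Icc 2 n, (j : ℝ) ^ (-r) * Real.exp (D * (j : ℝ) ^ (1 - β))
        ≤ C * Real.exp (D * (n : ℝ) ^ (1 - β)) * (n : ℝ) ^ (β - r) := by
  obtain ⟨hβ0, hβ1⟩ := hβ
  obtain ⟨c, hc, hkey⟩ :=
    exists_pos_eventually_mul_le_exp_mul_rpow_sub (s := β - r) (by linarith : 0 < 1 - β)
      (by linarith) hD
  have hstep : ∀ᶠ n : ℕ in atTop, c * ((n + 1 : ℕ) ^ (-r) * exp (D * ((n + 1 : ℕ) : ℝ) ^ (1 - β)))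
      ≤ exp (D * ((n + 1 : ℕ) : ℝ) ^ (1 - β)) * ((n + 1 : ℕ) : ℝ) ^ (β - r)
        - exp (D * (n : ℝ) ^ (1 - β)) * (n : ℝ) ^ (β - r) := by
    filter_upwards [(tendsto_natCast_atTop_atTop.comp (tendsto_add_atTop_nat 1)).eventually hkey]
      with n h
    have hn : (0 : ℝ) < (n + 1 : ℕ) := by positivity
    have hsub : ((n + 1 : ℕ) : ℝ) - 1 = n := by push_cast; ring
    rw [Function.comp_apply, hsub] at h
    refine le_of_eq_of_le ?_ h
    rw [show -r = (1 - β - 1) + (β - r) by ring, rpow_add hn]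
    ring
  obtain ⟨C, hC⟩ := exists_sum_Icc_le_mul_of_eventually (m := 2)
    (a := fun j ↦ (j : ℝ) ^ (-r) * exp (D * (j : ℝ) ^ (1 - β)))
    (G := fun n ↦ exp (D * (n : ℝ) ^ (1 - β)) * (n : ℝ) ^ (β - r)) hc (fun _ ↦ by positivity)
    (fun n hn ↦ mul_pos (exp_pos _) (rpow_pos_of_pos (by exact_mod_cast (by omega : 0 < n)) _))
    hstep
  exact ⟨C, fun n hn ↦ (hC n hn).trans_eq (mul_assoc _ _ _).symm⟩
end
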